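/- Let f : S → S be a homeomorphism of a connected, locally compact, σ-compact Hausdorff space. If there exists an end x ∈ Ends(S) whose orbit under the induced homeomorphism f_* is dense in Ends(S), then the mapping torus M_f has exactly one end. -/

import Mathlib

set_option linter.unusedSectionVars false
set_option linter.unusedVariables false
set_option maxHeartbeats 1000000

/-- The mapping torus of `f : X → X`: the quotient of `X × [0,1]` by the
identification `(x,1) ∼ (f x, 0)`. -/
def MappingTorus {X : Type*} [TopologicalSpace X] (f : X → X) : Type _ :=
  Quot (fun p q : X × unitInterval => p.2 = 1 ∧ q = (f p.1, 0))

instance {X : Type*} [TopologicalSpace X] (f : X → X) : TopologicalSpace (MappingTorus f) :=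
  inferInstanceAs (TopologicalSpace (Quot _))

/-- The space of ends of a topological space `X`: an end assigns to each compact set `K`
a connected component of its complement, compatibly with inclusions. -/
def SpaceEnds (X : Type*) [TopologicalSpace X] : Type _ :=
  {e : {K : Set X // IsCompact K} → Set X //
    (∀ K : {K : Set X // IsCompact K},
      ∃ x ∈ (↑K : Set X)ᶜ, e K = connectedComponentIn (↑K : Set X)ᶜ x) ∧
    (∀ K K' : {K : Set X // IsCompact K}, (↑K : Set X) ⊆ ↑K' → e K' ⊆ e K)}

/-- The topology on the space of ends: induced from the product of discrete spaces. -/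
instance SpaceEnds.instTopologicalSpace (X : Type*) [TopologicalSpace X] :
    TopologicalSpace (SpaceEnds X) :=
  TopologicalSpace.induced (Subtype.val)
    (@Pi.topologicalSpace _ (fun _ => Set X) (fun _ => ⊥))

/-- The end `ε` of `Y` corresponds to the end `e` of `X` under the proper map `g : X → Y`:
for each compact `K ⊆ Y` there is a compact `K' ⊇ g⁻¹(K)` in `X` with
`g (e K') ⊆ ε K`.  This is the defining property of the induced map on ends. -/
def EndCorresp {X Y : Type*} [TopologicalSpace X] [TopologicalSpace Y] (g : X → Y)
    (e : SpaceEnds X) (ε : SpaceEnds Y) : Prop :=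
  ∀ (K : Set Y) (hK : IsCompact K), ∃ (K' : Set X) (hK' : IsCompact K'),
    g ⁻¹' K ⊆ K' ∧ g '' (e.1 ⟨K', hK'⟩) ⊆ ε.1 ⟨K, hK⟩

open Set Topology Filter


open Set Topology Filter

section Helpers

variable {X : Type*} [TopologicalSpace X]

/-- Components in a subset are closed in that subset. -/
lemma ccIn_closure_subset {F : Set X} {x : X} :
    closure (connectedComponentIn F x) ∩ F ⊆ connectedComponentIn F x := by
  by_cases hx : x ∈ F
  · rintro y ⟨hyc, hyF⟩
    rw [connectedComponentIn_eq_image hx] at hyc ⊢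
    have h1 : (⟨y, hyF⟩ : F) ∈ closure (connectedComponent (⟨x, hx⟩ : F)) := by
      rw [closure_subtype]; exact hyc
    have h2 : (⟨y, hyF⟩ : F) ∈ connectedComponent (⟨x, hx⟩ : F) :=
      isClosed_connectedComponent.closure_subset h1
    exact ⟨⟨y, hyF⟩, h2, rfl⟩
  · rw [connectedComponentIn_eq_empty hx]
    simp

/-- A preconnected set meeting both the interior of a closed set `L` and the complement of `L`
meets the boundary `L \ interior L`. -/
lemma preconnected_meets_shell {A L : Set X} (hA : IsPreconnected A) (hL : IsClosed L)
    (h1 : (A ∩ interior L).Nonempty) (h2 : (A \ L).Nonempty) :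
    (A ∩ (L \ interior L)).Nonempty := by
  by_contra hne
  push_neg at hne
  rw [← Set.not_nonempty_iff_eq_empty] at hne
  have hsub : A ⊆ interior L ∪ Lᶜ := by
    intro y hy
    by_cases hyL : y ∈ L
    · by_cases hyi : y ∈ interior L
      · exact Or.inl hyi
      · exact absurd ⟨y, hy, hyL, hyi⟩ hne
    · exact Or.inr hyL
  obtain ⟨z, hz1, hz2, hz3⟩ := hA (interior L) Lᶜ isOpen_interior hL.isOpen_compl hsub h1
    (h2.imp fun y hy => ⟨hy.1, hy.2⟩)
  exact hz3 (interior_subset hz2)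

end Helpers


open Set Topology Filter

section SuraBura

variable {X : Type*} [TopologicalSpace X] [T2Space X]

/-- Šura-Bura type separation: in a compact set `E`, the connected component of `a`
can be separated from a disjoint closed set `C` by a set which is clopen in `E`. -/
lemma sura_bura_sep {E : Set X} (hE : IsCompact E) {a : X} (ha : a ∈ E) {C : Set X}
    (hC : IsClosed C) (hdisj : connectedComponentIn E a ∩ C = ∅) :
    ∃ A : Set X, a ∈ A ∧ A ⊆ E ∧ A ∩ C = ∅ ∧ IsCompact A ∧ ∃ U : Set X, IsOpen U ∧ A = U ∩ E := by
  haveI : CompactSpace E := isCompact_iff_compactSpace.mp hE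
  set aE : E := ⟨a, ha⟩
  have hcc : connectedComponent aE = ⋂ Z : {Z : Set E // IsClopen Z ∧ aE ∈ Z}, Z :=
    connectedComponent_eq_iInter_isClopen aE
  set C' : Set E := ((↑) : E → X) ⁻¹' C with hC'
  have hC'closed : IsClosed C' := hC.preimage continuous_subtype_val
  have hC'cpt : IsCompact C' := hC'closed.isCompact
  have hdisj' : (⋂ Z : {Z : Set E // IsClopen Z ∧ aE ∈ Z}, (Z : Set E)) ∩ C' = ∅ := by
    rw [← hcc]
    rw [eq_empty_iff_forall_notMem]
    rintro z ⟨hz1, hz2⟩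
    have : (z : X) ∈ connectedComponentIn E a ∩ C := by
      constructor
      · rw [connectedComponentIn_eq_image ha]
        exact ⟨z, hz1, rfl⟩
      · exact hz2
    rw [hdisj] at this
    exact this
  -- use compactness of C' to find finitely many clopens
  have : C' ∩ ⋂ Z : {Z : Set E // IsClopen Z ∧ aE ∈ Z}, (Z : Set E) = ∅ := by
    rw [inter_comm]; exact hdisj'
  obtain ⟨t, ht⟩ := hC'cpt.elim_finite_subfamily_closed
    (fun Z : {Z : Set E // IsClopen Z ∧ aE ∈ Z} => (Z : Set E))
    (fun Z => Z.2.1.isClosed) this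
  set A₀ : Set E := ⋂ Z ∈ t, (Z : Set E) with hA₀
  have hA₀clopen : IsClopen A₀ := by
    apply Set.Finite.isClopen_biInter t.finite_toSet
    exact fun Z _ => Z.2.1
  have haA₀ : aE ∈ A₀ := by
    simp only [hA₀, mem_iInter₂]
    exact fun Z _ => Z.2.2
  have hA₀C' : A₀ ∩ C' = ∅ := by
    rw [eq_empty_iff_forall_notMem]
    rintro z ⟨hz1, hz2⟩
    rw [eq_empty_iff_forall_notMem] at ht
    apply ht z
    refine ⟨hz2, ?_⟩
    simpa [hA₀] using hz1
  obtain ⟨U, hUopen, hU⟩ := isOpen_induced_iff.mp hA₀clopen.isOpen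
  refine ⟨((↑) : E → X) '' A₀, ⟨aE, haA₀, rfl⟩, by rintro x ⟨z, _, rfl⟩; exact z.2, ?_, ?_, U, hUopen, ?_⟩
  · rw [eq_empty_iff_forall_notMem]
    rintro x ⟨⟨z, hz, rfl⟩, hx2⟩
    rw [eq_empty_iff_forall_notMem] at hA₀C'
    exact hA₀C' z ⟨hz, hx2⟩
  · exact (hA₀clopen.isClosed.isCompact).image continuous_subtype_val
  · rw [← hU, Subtype.image_preimage_coe]
    rw [inter_comm]

end SuraBura


open Set Topology Filter

section Bump
variable {X : Type*} [TopologicalSpace X] [T2Space X]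

/-- Boundary bumping: in a compact preconnected set `Y`, the component of `a` in `Y ∩ L`
meets the closure of `Y \ L`, provided the latter is nonempty. -/
lemma bump {Y L : Set X} (hYc : IsCompact Y) (hY : IsPreconnected Y) (hL : IsClosed L)
    {a : X} (haY : a ∈ Y) (haL : a ∈ L) (hout : (Y \ L).Nonempty) :
    (connectedComponentIn (Y ∩ L) a ∩ closure (Y \ L)).Nonempty := by
  by_contra hne
  rw [Set.not_nonempty_iff_eq_empty] at hne
  obtain ⟨A, haA, hAsub, hAC, hAcpt, U, hUopen, hAU⟩ :=
    sura_bura_sep (hYc.inter_right hL) ⟨haY, haL⟩ isClosed_closure hne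
  set V := U ∩ (closure (Y \ L))ᶜ with hV
  have hAopen : A = V ∩ Y := by
    apply Subset.antisymm
    · intro x hx
      refine ⟨⟨(hAU ▸ hx).1, fun hc => ?_⟩, (hAsub hx).1⟩
      rw [eq_empty_iff_forall_notMem] at hAC
      exact hAC x ⟨hx, hc⟩
    · rintro x ⟨⟨hxU, hxc⟩, hxY⟩
      have hxL : x ∈ L := by
        by_contra hxL
        exact hxc (subset_closure ⟨hxY, hxL⟩)
      rw [hAU]; exact ⟨hxU, hxY, hxL⟩
  have hVopen : IsOpen V := hUopen.inter isClosed_closure.isOpen_compl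
  have hsub : Y ⊆ V ∪ Aᶜ := by
    intro y hy
    by_cases hyA : y ∈ A
    · exact Or.inl (by rw [hAopen] at hyA; exact hyA.1)
    · exact Or.inr hyA
  obtain ⟨b, hbY, hbL⟩ := hout
  have hbA : b ∉ A := fun hb => hbL (hAsub hb).2
  have haV : a ∈ V := by rw [hAopen] at haA; exact haA.1
  obtain ⟨z, hzY, hzV, hzA⟩ := hY V Aᶜ hVopen hAcpt.isClosed.isOpen_compl hsub
    ⟨a, haY, haV⟩ ⟨b, hbY, hbA⟩
  exact hzA (by rw [hAopen]; exact ⟨hzV, hzY⟩)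

/-- A bounded (relatively compact) component of the complement of a compact set
in a connected non-compact space has closure meeting the compact set. -/
lemma attach [ConnectedSpace X] [LocallyCompactSpace X]
    (hnc : ¬ IsCompact (univ : Set X)) {K : Set X} (hK : IsCompact K) {x : X} (hx : x ∈ Kᶜ)
    {B : Set X} (hB : IsCompact B) (hsub : connectedComponentIn Kᶜ x ⊆ B) :
    (closure (connectedComponentIn Kᶜ x) ∩ K).Nonempty := by
  by_contra hne
  rw [Set.not_nonempty_iff_eq_empty] at hne
  set P := connectedComponentIn Kᶜ x with hP
  have hPc : closure P ⊆ Kᶜ := by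
    intro y hy
    by_contra hyK
    rw [eq_empty_iff_forall_notMem] at hne
    exact hne y ⟨hy, not_not.mp (fun h => hyK (fun hK' => h hK'))⟩
  have hPclosed : IsClosed P := by
    have : closure P ⊆ P := fun y hy => ccIn_closure_subset ⟨hy, hPc hy⟩
    exact isClosed_of_closure_subset this
  have hPcpt : IsCompact P := hB.of_isClosed_subset hPclosed hsub
  obtain ⟨N, hNcpt, hPN, hNK⟩ := exists_compact_between hPcpt (hK.isClosed.isOpen_compl)
    (connectedComponentIn_subset _ _)
  have hPN' : P = connectedComponentIn N x := by
    apply Subset.antisymm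
    · exact isPreconnected_connectedComponentIn.subset_connectedComponentIn
        (mem_connectedComponentIn hx) (hPN.trans interior_subset)
    · exact isPreconnected_connectedComponentIn.subset_connectedComponentIn
        (mem_connectedComponentIn (hPN (mem_connectedComponentIn hx) |> interior_subset))
        ((connectedComponentIn_subset _ _).trans hNK)
  obtain ⟨A, haA, hAsub, hAC, hAcpt, U, hUopen, hAU⟩ :=
    sura_bura_sep hNcpt (hPN (mem_connectedComponentIn hx) |> interior_subset)
      (isClosed_compl_iff.mpr isOpen_interior : IsClosed (interior N)ᶜ) (by
        rw [← hPN']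
        rw [eq_empty_iff_forall_notMem]
        rintro z ⟨hz1, hz2⟩
        exact hz2 (hPN hz1))
  have hAopen : A = U ∩ interior N := by
    apply Subset.antisymm
    · intro z hz
      refine ⟨(hAU ▸ hz).1, ?_⟩
      by_contra hzi
      rw [eq_empty_iff_forall_notMem] at hAC
      exact hAC z ⟨hz, hzi⟩
    · rintro z ⟨hzU, hzN⟩
      rw [hAU]; exact ⟨hzU, interior_subset hzN⟩
  have hclopen : IsClopen A := ⟨hAcpt.isClosed, hAopen ▸ (hUopen.inter isOpen_interior)⟩
  have : A = univ := hclopen.eq_univ ⟨x, haA⟩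
  exact hnc (this ▸ hAcpt)

end Bump


open Set Topology Filter

section ULS
variable {X : Type*} [TopologicalSpace X] [T2Space X]

/-- The limit-superior of a sequence of sets along an ultrafilter. -/
def ULS (𝒰 : Ultrafilter ℕ) (N : ℕ → Set X) : Set X :=
  ⋂ U ∈ 𝒰, closure (⋃ m ∈ U, N m)

lemma ULS_closed (𝒰 : Ultrafilter ℕ) (N : ℕ → Set X) : IsClosed (ULS 𝒰 N) :=
  isClosed_biInter fun _ _ => isClosed_closure

lemma ULS_subset (𝒰 : Ultrafilter ℕ) (N : ℕ → Set X) : ULS 𝒰 N ⊆ closure (⋃ m, N m) := by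
  intro x hx
  have := mem_iInter₂.mp hx univ 𝒰.univ_mem
  refine closure_mono ?_ this
  exact iUnion₂_subset fun m _ => subset_iUnion N m

lemma mem_ULS_of_cluster {𝒰 : Ultrafilter ℕ} {N : ℕ → Set X} {p : ℕ → X} {x : X}
    (hx : ClusterPt x (Filter.map p ↑𝒰)) (hp : {m | p m ∈ N m} ∈ 𝒰) : x ∈ ULS 𝒰 N := by
  rw [ULS, mem_iInter₂]
  intro U hU
  rw [mem_closure_iff]
  intro O hO hxO
  have hle : Filter.map p ↑𝒰 ≤ 𝓝 x := by
    have : ClusterPt x ↑(Ultrafilter.map p 𝒰) := hx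
    exact Ultrafilter.clusterPt_iff.mp this
  have h2 : p ⁻¹' O ∈ 𝒰 := hle (hO.mem_nhds hxO)
  have h3 : (U ∩ {m | p m ∈ N m} ∩ p ⁻¹' O : Set ℕ) ∈ 𝒰 :=
    inter_mem (inter_mem hU hp) h2
  obtain ⟨m, ⟨hmU, hmN⟩, hmO⟩ := 𝒰.nonempty_of_mem h3
  exact ⟨p m, hmO, mem_iUnion₂.mpr ⟨m, hmU, hmN⟩⟩

/-- existence of cluster points for sequences eventually in a compact set -/
lemma exists_cluster_ULS (𝒰 : Ultrafilter ℕ) {N : ℕ → Set X} {Sig : Set X} (hSig : IsCompact Sig)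
    (p : ℕ → X) (hpSig : {m | p m ∈ Sig} ∈ 𝒰) (hp : {m | p m ∈ N m} ∈ 𝒰) :
    ∃ x ∈ Sig, x ∈ ULS 𝒰 N := by
  have hle : Filter.map p ↑𝒰 ≤ 𝓟 Sig := by
    rw [Filter.le_principal_iff]
    exact Filter.mem_map.mpr hpSig
  obtain ⟨x, hxSig, hx⟩ := hSig.exists_clusterPt hle
  exact ⟨x, hxSig, mem_ULS_of_cluster hx hp⟩



lemma ULS_preconnected (𝒰 : Ultrafilter ℕ) {N : ℕ → Set X} {Z : Set X} (hZ : IsCompact Z)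
    (hNZ : ∀ m, N m ⊆ Z) (hNpc : ∀ m, IsPreconnected (N m)) : IsPreconnected (ULS 𝒰 N) := by
  set s := ULS 𝒰 N with hs
  have hsZ : s ⊆ Z := (ULS_subset 𝒰 N).trans
    (closure_minimal (iUnion_subset hNZ) hZ.isClosed)
  rw [IsPreconnected]
  intro U V hU hV hsub ⟨u, huS, huU⟩ ⟨v, hvS, hvV⟩
  by_contra hne
  rw [Set.not_nonempty_iff_eq_empty] at hne
  have hAeq : s ∩ U = s \ V := by
    apply Subset.antisymm
    · rintro y ⟨hy1, hy2⟩
      refine ⟨hy1, fun hyV => ?_⟩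
      rw [eq_empty_iff_forall_notMem] at hne
      exact hne y ⟨hy1, hy2, hyV⟩
    · rintro y ⟨hy1, hy2⟩
      rcases hsub hy1 with h | h
      · exact ⟨hy1, h⟩
      · exact absurd h hy2
  have hBeq : s ∩ V = s \ U := by
    apply Subset.antisymm
    · rintro y ⟨hy1, hy2⟩
      refine ⟨hy1, fun hyU => ?_⟩
      rw [eq_empty_iff_forall_notMem] at hne
      exact hne y ⟨hy1, hyU, hy2⟩
    · rintro y ⟨hy1, hy2⟩
      rcases hsub hy1 with h | h
      · exact absurd h hy2
      · exact ⟨hy1, h⟩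
  have hAclosed : IsClosed (s ∩ U) := by
    rw [hAeq]; exact (ULS_closed 𝒰 N).sdiff hV
  have hBclosed : IsClosed (s ∩ V) := by
    rw [hBeq]; exact (ULS_closed 𝒰 N).sdiff hU
  have hAcpt : IsCompact (s ∩ U) := hZ.of_isClosed_subset hAclosed
    ((inter_subset_left).trans hsZ)
  have hBcpt : IsCompact (s ∩ V) := hZ.of_isClosed_subset hBclosed
    ((inter_subset_left).trans hsZ)
  have hABdisj : Disjoint (s ∩ U) (s ∩ V) := by
    rw [Set.disjoint_left]
    rintro y ⟨hy1, hy2⟩ ⟨_, hy3⟩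
    rw [eq_empty_iff_forall_notMem] at hne
    exact hne y ⟨hy1, hy2, hy3⟩
  obtain ⟨U', V', hU', hV', hAU', hBV', hUV'⟩ :=
    SeparatedNhds.of_isCompact_isCompact hAcpt hBcpt hABdisj
  have hsU'V' : s ⊆ U' ∪ V' := by
    intro y hy
    rcases hsub hy with h | h
    · exact Or.inl (hAU' ⟨hy, h⟩)
    · exact Or.inr (hBV' ⟨hy, h⟩)
  -- Step 1: ultrafilter-many N m are inside U' ∪ V'
  have hT : {m | N m ⊆ U' ∪ V'} ∈ 𝒰 := by
    by_contra hTc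
    rw [← Ultrafilter.compl_mem_iff_notMem] at hTc
    classical
    have hch : ∀ m ∈ ({m | N m ⊆ U' ∪ V'}ᶜ : Set ℕ), ∃ y ∈ N m, y ∉ U' ∪ V' := by
      intro m hm
      simp only [mem_compl_iff, mem_setOf_eq] at hm
      rcases not_subset.mp hm with ⟨y, hy1, hy2⟩
      exact ⟨y, hy1, hy2⟩
    set q : ℕ → X := fun m => if h : ∃ y ∈ N m, y ∉ U' ∪ V' then h.choose else u with hq
    have hqeq : ∀ m ∈ ({m | N m ⊆ U' ∪ V'}ᶜ : Set ℕ), q m ∈ N m ∧ q m ∉ U' ∪ V' := by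
      intro m hm
      have hex := hch m hm
      have : q m = hex.choose := by simp only [hq]; rw [dif_pos hex]
      rw [this]
      exact hex.choose_spec
    have hq1 : {m | q m ∈ Z \ (U' ∪ V')} ∈ 𝒰 := by
      filter_upwards [hTc] with m hm
      exact ⟨hNZ m (hqeq m hm).1, (hqeq m hm).2⟩
    have hq2 : {m | q m ∈ N m} ∈ 𝒰 := by
      filter_upwards [hTc] with m hm
      exact (hqeq m hm).1
    obtain ⟨x, hx1, hx2⟩ := exists_cluster_ULS 𝒰
      (hZ.of_isClosed_subset (hZ.isClosed.sdiff (hU'.union hV')) diff_subset) q hq1 hq2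
    exact hx1.2 (hsU'V' hx2)
  -- Step 2: each such N m is inside U' or inside V'
  have hTsplit : ∀ m ∈ {m | N m ⊆ U' ∪ V'}, N m ⊆ U' ∨ N m ⊆ V' := fun m hm =>
    (hNpc m).subset_or_subset hU' hV' hUV' hm
  rcases 𝒰.mem_or_compl_mem {m | N m ⊆ U'} with hT1 | hT1
  · -- contradiction with v
    have hv' : v ∈ closure (⋃ m ∈ {m | N m ⊆ U'}, N m) := mem_iInter₂.mp hvS _ hT1
    rw [mem_closure_iff] at hv'
    obtain ⟨y, hyV', hy2⟩ := hv' V' hV' (hBV' ⟨hvS, hvV⟩)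
    obtain ⟨m, hm1, hm2⟩ := mem_iUnion₂.mp hy2
    exact (Set.disjoint_left.mp hUV') (hm1 hm2) hyV'
  · have hT2 : ({m | N m ⊆ U' ∪ V'} ∩ {m | N m ⊆ U'}ᶜ : Set ℕ) ∈ 𝒰 := inter_mem hT hT1
    have hu' : u ∈ closure (⋃ m ∈ ({m | N m ⊆ U' ∪ V'} ∩ {m | N m ⊆ U'}ᶜ : Set ℕ), N m) :=
      mem_iInter₂.mp huS _ hT2
    rw [mem_closure_iff] at hu'
    obtain ⟨y, hyU', hy2⟩ := hu' U' hU' (hAU' ⟨huS, huU⟩)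
    obtain ⟨m, hm1, hm2⟩ := mem_iUnion₂.mp hy2
    have : N m ⊆ V' := by
      rcases hTsplit m hm1.1 with h | h
      · exact absurd h hm1.2
      · exact h
    exact (Set.disjoint_left.mp hUV') hyU' (this hm2)

end ULS

namespace MTP

variable {S : Type*} [TopologicalSpace S] [T2Space S] (f : S ≃ₜ S)

/-- the relation defining the mapping torus -/
def mtrel : S × unitInterval → S × unitInterval → Prop :=
  fun p q => p.2 = 1 ∧ q = (⇑f p.1, 0)

/-- the quotient map -/
def mtpi : S × unitInterval → MappingTorus (⇑f) := Quot.mk _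

lemma I_zero_ne_one : (0 : unitInterval) ≠ 1 := by
  intro h
  have := congrArg Subtype.val h
  norm_num at this

lemma mtrel_cases {p q : S × unitInterval} (h : Relation.EqvGen (mtrel f) p q) :
    p = q ∨ mtrel f p q ∨ mtrel f q p := by
  induction h with
  | rel a b hab => exact Or.inr (Or.inl hab)
  | refl a => exact Or.inl rfl
  | symm a b _ ih =>
    rcases ih with h | h | h
    · exact Or.inl h.symm
    · exact Or.inr (Or.inr h)
    · exact Or.inr (Or.inl h)
  | trans a b c _ _ ih1 ih2 =>
    rcases ih1 with h1 | h1 | h1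
    · subst h1; exact ih2
    · rcases ih2 with h2 | h2 | h2
      · subst h2; exact Or.inr (Or.inl h1)
      · -- b.2 = 1 but b = (f a.1, 0)
        exfalso
        have hb0 : b.2 = 0 := by rw [h1.2]
        exact I_zero_ne_one (hb0 ▸ h2.1)
      · -- b = (f a.1, 0) and b = (f c.1, 0), a.2 = 1 = c.2
        left
        have h1' := h1.2
        have h2' := h2.2
        have hfa : (⇑f a.1, (0:unitInterval)) = (⇑f c.1, (0:unitInterval)) := by
          rw [← h1', h2']
        have : a.1 = c.1 := f.injective (congrArg Prod.fst hfa)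
        have ha2 : a.2 = 1 := h1.1
        have hc2 : c.2 = 1 := h2.1
        exact Prod.ext this (by rw [ha2, hc2])
    · rcases ih2 with h2 | h2 | h2
      · subst h2; exact Or.inr (Or.inr h1)
      · -- a = (f b.1, 0) ; b.2 = 1 : then b to c is rel: c = (f b.1, 0) = a
        left
        rw [h1.2, h2.2]
      · -- h1 : mtrel b a, h2 : mtrel c b : b = (f c.1, 0), b.2 = 1: contradiction
        exfalso
        have hb0 : b.2 = 0 := by rw [h2.2]
        exact I_zero_ne_one (hb0 ▸ h1.1)

lemma mtpi_eq_iff {p q : S × unitInterval} :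
    mtpi f p = mtpi f q ↔ (p = q ∨ mtrel f p q ∨ mtrel f q p) := by
  constructor
  · intro h
    exact mtrel_cases f (Quot.eq.mp h)
  · rintro (rfl | h | h)
    · rfl
    · exact Quot.sound h
    · exact (Quot.sound h).symm

lemma continuous_mtpi : Continuous (mtpi f) := continuous_quot_mk

lemma surjective_mtpi : Function.Surjective (mtpi f) := Quot.mk_surjective

lemma isQuotientMap_mtpi : IsQuotientMap (mtpi f) := isQuotientMap_quot_mk

/-- the quotient map of the mapping torus is a closed map -/
lemma isClosedMap_mtpi : IsClosedMap (mtpi f) := by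
  intro A hA
  rw [← (isQuotientMap_mtpi f).isClosed_preimage]
  have heq : mtpi f ⁻¹' (mtpi f '' A) =
      A ∪ ((⇑f '' {x | (x, (1:unitInterval)) ∈ A}) ×ˢ ({0} : Set unitInterval))
        ∪ (({x | ((⇑f x : S), (0:unitInterval)) ∈ A}) ×ˢ ({1} : Set unitInterval)) := by
    ext p
    simp only [mem_preimage, mem_image, mem_union]
    constructor
    · rintro ⟨q, hqA, hq⟩
      rcases (mtpi_eq_iff f).mp hq with rfl | h | h
      · exact Or.inl (Or.inl hqA)
      · -- mtrel q p : q.2 = 1, p = (f q.1, 0)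
        refine Or.inl (Or.inr ?_)
        have hq1 : q = (q.1, (1:unitInterval)) := Prod.ext rfl h.1
        rw [h.2]
        refine ⟨⟨q.1, ?_, rfl⟩, rfl⟩
        simp only [mem_setOf_eq]
        rw [← hq1]; exact hqA
      · -- mtrel p q : p.2 = 1, q = (f p.1, 0)
        refine Or.inr ?_
        constructor
        · simp only [mem_setOf_eq]
          rw [← h.2]; exact hqA
        · exact h.1
    · rintro ((hpA | ⟨⟨x, hxA, hfx⟩, hp2⟩) | ⟨hp1, hp2⟩)
      · exact ⟨p, hpA, rfl⟩
      · refine ⟨(x, 1), hxA, ?_⟩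
        apply (mtpi_eq_iff f).mpr
        refine Or.inr (Or.inl ⟨rfl, ?_⟩)
        have : p = (p.1, p.2) := rfl
        rw [this]
        simp only [mem_singleton_iff] at hp2
        rw [hp2, ← hfx]
      · refine ⟨(⇑f p.1, 0), hp1, ?_⟩
        apply (mtpi_eq_iff f).mpr
        refine Or.inr (Or.inr ⟨?_, rfl⟩)
        simp only [mem_singleton_iff] at hp2
        exact hp2
  rw [heq]
  refine ((hA.union ?_).union ?_)
  · refine IsClosed.prod ?_ isClosed_singleton
    exact (f.isClosedMap _ (hA.preimage (continuous_id.prodMk continuous_const)))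
  · refine IsClosed.prod ?_ isClosed_singleton
    exact hA.preimage (f.continuous.prodMk continuous_const)


/-- the cylinder over a set -/
def cyl (A : Set S) : Set (MappingTorus (⇑f)) := mtpi f '' (A ×ˢ (univ : Set unitInterval))

lemma cyl_compact {A : Set S} (hA : IsCompact A) : IsCompact (cyl f A) :=
  (hA.prod isCompact_univ).image (continuous_mtpi f)

lemma cyl_mono {A B : Set S} (h : A ⊆ B) : cyl f A ⊆ cyl f B :=
  image_mono (prod_mono h (le_refl _))

lemma mem_cyl_iff {A : Set S} {x : S} {t : unitInterval} :
    mtpi f (x, t) ∈ cyl f A ↔ (x ∈ A ∨ (t = 0 ∧ f.symm x ∈ A) ∨ (t = 1 ∧ ⇑f x ∈ A)) := by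
  constructor
  · rintro ⟨⟨y, s⟩, ⟨hyA, -⟩, hq⟩
    rcases (mtpi_eq_iff f).mp hq with heq | h | h
    · left
      have : y = x := congrArg Prod.fst heq
      rwa [← this]
    · -- mtrel (y,s) (x,t) : s = 1 ∧ (x,t) = (f y, 0)
      right; left
      have hx : x = ⇑f y := congrArg Prod.fst h.2
      have ht : t = 0 := congrArg Prod.snd h.2
      refine ⟨ht, ?_⟩
      rw [hx]
      simpa using hyA
    · -- mtrel (x,t) (y,s) : t = 1 ∧ (y,s) = (f x, 0)
      right; right
      have hy : y = ⇑f x := congrArg Prod.fst h.2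
      exact ⟨h.1, by rwa [← hy]⟩
  · rintro (hx | ⟨ht, hx⟩ | ⟨ht, hx⟩)
    · exact ⟨(x, t), ⟨hx, mem_univ _⟩, rfl⟩
    · refine ⟨(f.symm x, 1), ⟨hx, mem_univ _⟩, ?_⟩
      apply (mtpi_eq_iff f).mpr
      refine Or.inr (Or.inl ⟨rfl, ?_⟩)
      rw [ht]
      simp
    · refine ⟨(⇑f x, 0), ⟨hx, mem_univ _⟩, ?_⟩
      apply (mtpi_eq_iff f).mpr
      refine Or.inr (Or.inr ⟨ht, rfl⟩)

/-- the "hull" of a set : `A ∪ f(A) ∪ f⁻¹(A)` -/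
def hull (A : Set S) : Set S := A ∪ ⇑f '' A ∪ ⇑f.symm '' A

lemma subset_hull (A : Set S) : A ⊆ hull f A := fun x hx => Or.inl (Or.inl hx)

lemma hull_mono {A B : Set S} (h : A ⊆ B) : hull f A ⊆ hull f B :=
  union_subset_union (union_subset_union h (image_mono h)) (image_mono h)

lemma hull_compact {A : Set S} (hA : IsCompact A) : IsCompact (hull f A) :=
  ((hA.union (hA.image f.continuous)).union (hA.image f.symm.continuous))

/-- points outside the hull have their whole segment outside the cylinder -/
lemma seg_avoid {A : Set S} {x : S} (hx : x ∉ hull f A) (t : unitInterval) :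
    mtpi f (x, t) ∉ cyl f A := by
  intro hmem
  rcases (mem_cyl_iff f).mp hmem with h | ⟨-, h⟩ | ⟨-, h⟩
  · exact hx (Or.inl (Or.inl h))
  · -- f.symm x ∈ A, so x ∈ f '' A
    exact hx (Or.inl (Or.inr ⟨f.symm x, h, by simp⟩))
  · exact hx (Or.inr ⟨⇑f x, h, by simp⟩)

/-- points outside `A ∪ f(A)` have level-0 point outside the cylinder -/
lemma lev0_avoid {A : Set S} {x : S} (hx1 : x ∉ A) (hx2 : x ∉ ⇑f '' A) :
    mtpi f (x, 0) ∉ cyl f A := by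
  intro hmem
  rcases (mem_cyl_iff f).mp hmem with h | ⟨-, h⟩ | ⟨h0, -⟩
  · exact hx1 h
  · exact hx2 ⟨f.symm x, h, by simp⟩
  · exact I_zero_ne_one h0

/-- the vertical segment -/
def seg (x : S) : Set (MappingTorus (⇑f)) := (fun t => mtpi f (x, t)) '' univ

lemma seg_preconnected (x : S) : IsPreconnected (seg f x) :=
  isPreconnected_univ.image _ ((continuous_mtpi f).comp
    (continuous_const.prodMk continuous_id)).continuousOn

lemma mem_seg_zero (x : S) : mtpi f (x, 0) ∈ seg f x := ⟨0, mem_univ _, rfl⟩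

lemma mem_seg_one (x : S) : mtpi f (x, 1) ∈ seg f x := ⟨1, mem_univ _, rfl⟩

lemma mtpi_one_eq (x : S) : mtpi f (x, 1) = mtpi f (⇑f x, 0) :=
  Quot.sound ⟨rfl, rfl⟩

lemma seg_subset_compl {A : Set S} {x : S} (hx : x ∉ hull f A) :
    seg f x ⊆ (cyl f A)ᶜ := by
  rintro p ⟨t, -, rfl⟩
  exact seg_avoid f hx t

/-- level zero embedding of a preconnected set avoiding `A ∪ f(A)` -/
lemma horiz_subset_compl {A B : Set S} (hB : ∀ x ∈ B, x ∉ A ∧ x ∉ ⇑f '' A) :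
    (fun x => mtpi f (x, 0)) '' B ⊆ (cyl f A)ᶜ := by
  rintro p ⟨x, hx, rfl⟩
  exact lev0_avoid f (hB x hx).1 (hB x hx).2

lemma horiz_preconnected {B : Set S} (hB : IsPreconnected B) :
    IsPreconnected ((fun x => mtpi f (x, 0)) '' B) :=
  hB.image _ ((continuous_mtpi f).comp (continuous_id.prodMk continuous_const)).continuousOn



variable [LocallyCompactSpace S] [SigmaCompactSpace S]

/-- an exhaustion of `S` adapted to `f` -/
structure Exh where
  L : ℕ → Set S
  cpt : ∀ n, IsCompact (L n)
  hne : ∀ n, (L n).Nonempty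
  hull_subset_int : ∀ n, hull f (L n) ⊆ interior (L (n + 1))
  iUnion_int : ⋃ n, interior (L n) = univ

variable [LocallyCompactSpace S] [SigmaCompactSpace S]

noncomputable def LLaux [Nonempty S] : ℕ → {A : Set S // IsCompact A ∧ A.Nonempty}
  | 0 => ⟨(CompactExhaustion.choice S) 0 ∪ {Classical.arbitrary S},
      ((CompactExhaustion.choice S).isCompact 0).union isCompact_singleton,
      ⟨Classical.arbitrary S, Or.inr rfl⟩⟩
  | (n + 1) =>
    let prev := LLaux n
    let h := exists_compact_superset (hull_compact f prev.2.1)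
    ⟨(CompactExhaustion.choice S) (n + 1) ∪ h.choose,
      ((CompactExhaustion.choice S).isCompact (n + 1)).union h.choose_spec.1,
      prev.2.2.imp fun x hx => Or.inr (interior_subset (h.choose_spec.2 (subset_hull f _ hx)))⟩

noncomputable def mkExh [Nonempty S] : Exh f where
  L n := (LLaux f n).1
  cpt n := (LLaux f n).2.1
  hne n := (LLaux f n).2.2
  hull_subset_int n := by
    show hull f (LLaux f n).1 ⊆ interior (LLaux f (n+1)).1
    have h := exists_compact_superset (hull_compact f (LLaux f n).2.1)
    calc hull f (LLaux f n).1 ⊆ interior h.choose := h.choose_spec.2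
    _ ⊆ interior ((CompactExhaustion.choice S) (n + 1) ∪ h.choose) :=
        interior_mono subset_union_right
    _ = interior (LLaux f (n+1)).1 := rfl
  iUnion_int := by
    apply eq_univ_of_forall
    intro x
    rw [mem_iUnion]
    obtain ⟨n, hn⟩ : ∃ n, x ∈ (CompactExhaustion.choice S) n :=
      ⟨_, (CompactExhaustion.choice S).mem_find x⟩
    refine ⟨n + 1, ?_⟩
    have h1 : x ∈ interior ((CompactExhaustion.choice S) (n+1)) :=
      (CompactExhaustion.choice S).subset_interior_succ n hn
    have h2 : (CompactExhaustion.choice S) (n+1) ⊆ (LLaux f (n+1)).1 := by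
      cases n with
      | zero => exact subset_union_left
      | succ m => exact subset_union_left
    exact interior_mono h2 h1

namespace Exh
variable {f} (E : Exh f)

lemma subset_succ (n : ℕ) : E.L n ⊆ E.L (n + 1) :=
  (subset_hull f _).trans ((E.hull_subset_int n).trans interior_subset)

lemma mono {m n : ℕ} (h : m ≤ n) : E.L m ⊆ E.L n :=
  monotone_nat_of_le_succ (fun k => E.subset_succ k) h

lemma subset_int_succ (n : ℕ) : E.L n ⊆ interior (E.L (n + 1)) :=
  (subset_hull f _).trans (E.hull_subset_int n)

/-- the hull sequence -/
def hl (n : ℕ) : Set S := hull f (E.L n)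

lemma hl_cpt (n : ℕ) : IsCompact (E.hl n) := hull_compact f (E.cpt n)

lemma L_subset_hl (n : ℕ) : E.L n ⊆ E.hl n := subset_hull f _

lemma hl_subset_int_L (n : ℕ) : E.hl n ⊆ interior (E.L (n + 1)) := E.hull_subset_int n

lemma hl_subset_L (n : ℕ) : E.hl n ⊆ E.L (n + 1) :=
  (E.hl_subset_int_L n).trans interior_subset

lemma hl_mono {m n : ℕ} (h : m ≤ n) : E.hl m ⊆ E.hl n := hull_mono f (E.mono h)

lemma hl_subset_int_hl (n : ℕ) : E.hl n ⊆ interior (E.hl (n + 1)) :=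
  (E.hl_subset_int_L n).trans (interior_mono (E.L_subset_hl (n+1)))

lemma absorb {C : Set S} (hC : IsCompact C) : ∃ n, C ⊆ interior (E.L n) := by
  obtain ⟨t, ht⟩ := hC.elim_finite_subcover (fun n => interior (E.L n))
    (fun n => isOpen_interior) (by rw [E.iUnion_int]; exact subset_univ C)
  rcases t.eq_empty_or_nonempty with rfl | htne
  · refine ⟨0, ?_⟩
    intro x hx
    simpa using ht hx
  · refine ⟨t.max' htne, ?_⟩
    intro x hx
    obtain ⟨n, hn, hxn⟩ := mem_iUnion₂.mp (ht hx)
    exact interior_mono (E.mono (t.le_max' n hn)) hxn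

lemma shell_ne (hnc : ¬ IsCompact (univ : Set S)) [ConnectedSpace S] (n : ℕ) :
    (E.L n \ interior (E.L n)).Nonempty := by
  by_contra hemp
  rw [Set.not_nonempty_iff_eq_empty] at hemp
  have hopen : IsOpen (E.L n) := by
    have : E.L n ⊆ interior (E.L n) := by
      intro x hx
      by_contra hxi
      rw [eq_empty_iff_forall_notMem] at hemp
      exact hemp x ⟨hx, hxi⟩
    rw [Subset.antisymm this interior_subset]; exact isOpen_interior
  have hclopen : IsClopen (E.L n) := ⟨(E.cpt n).isClosed, hopen⟩
  have := hclopen.eq_univ (E.hne n)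
  exact hnc (this ▸ E.cpt n)

end Exh

section Cyl
variable {f} (E : Exh f)

/-- the open set trapped between consecutive cylinders -/
lemma cylO_aux (n : ℕ) :
    IsOpen ((mtpi f '' (((interior (E.L n))ᶜ) ×ˢ (univ : Set unitInterval)))ᶜ) ∧
    ((mtpi f '' (((interior (E.L n))ᶜ) ×ˢ (univ : Set unitInterval)))ᶜ) ⊆ cyl f (E.L n) := by
  constructor
  · exact (isClosedMap_mtpi f _ ((isOpen_interior.isClosed_compl).prod isClosed_univ)).isOpen_compl
  · intro q hq
    obtain ⟨⟨y, s⟩, rfl⟩ := surjective_mtpi f q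
    have hy : y ∈ interior (E.L n) := by
      by_contra hy
      exact hq ⟨(y, s), ⟨hy, mem_univ _⟩, rfl⟩
    exact (mem_cyl_iff f).mpr (Or.inl (interior_subset hy))

lemma cyl_subset_O (n : ℕ) :
    cyl f (E.L n) ⊆ ((mtpi f '' (((interior (E.L (n+1)))ᶜ) ×ˢ (univ : Set unitInterval)))ᶜ) := by
  rintro q hq
  obtain ⟨⟨y, s⟩, ⟨hyL, -⟩, rfl⟩ := hq
  intro hmem
  have hmem' : mtpi f (y, s) ∈ cyl f ((interior (E.L (n+1)))ᶜ) := hmem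
  rcases (mem_cyl_iff f).mp hmem' with h | ⟨-, h⟩ | ⟨-, h⟩
  · exact h (E.hull_subset_int n (Or.inl (Or.inl hyL)))
  · exact h (E.hull_subset_int n (Or.inr ⟨y, hyL, rfl⟩))
  · exact h (E.hull_subset_int n (Or.inl (Or.inr ⟨y, hyL, rfl⟩)))

lemma cyl_subset_int_cyl (n : ℕ) : cyl f (E.L n) ⊆ interior (cyl f (E.L (n+1))) := by
  intro q hq
  obtain ⟨hO, hOsub⟩ := cylO_aux E (n+1)
  exact interior_maximal hOsub hO (cyl_subset_O E n hq)

lemma mem_int_cyl (q : MappingTorus (⇑f)) : ∃ n, q ∈ interior (cyl f (E.L n)) := by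
  obtain ⟨⟨y, s⟩, rfl⟩ := surjective_mtpi f q
  have h1 : ∃ a, y ∈ interior (E.L a) := by
    have := E.iUnion_int ▸ mem_univ y
    exact mem_iUnion.mp (by rw [E.iUnion_int]; exact mem_univ y)
  have h2 : ∃ b, ⇑f y ∈ interior (E.L b) := mem_iUnion.mp (by rw [E.iUnion_int]; exact mem_univ _)
  have h3 : ∃ c, ⇑f.symm y ∈ interior (E.L c) :=
    mem_iUnion.mp (by rw [E.iUnion_int]; exact mem_univ _)
  obtain ⟨a, ha⟩ := h1; obtain ⟨b, hb⟩ := h2; obtain ⟨c, hc⟩ := h3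
  set n := max a (max b c) with hn
  refine ⟨n, ?_⟩
  obtain ⟨hO, hOsub⟩ := cylO_aux E n
  apply interior_maximal hOsub hO
  intro hmem
  have hmem' : mtpi f (y, s) ∈ cyl f ((interior (E.L n))ᶜ) := hmem
  rcases (mem_cyl_iff f).mp hmem' with h | ⟨-, h⟩ | ⟨-, h⟩
  · exact h (interior_mono (E.mono (le_max_left a _)) ha)
  · exact h (interior_mono (E.mono ((le_max_right b c).trans (le_max_right a _))) hc)
  · exact h (interior_mono (E.mono ((le_max_left b c).trans (le_max_right a _))) hb)

lemma absorbM {C : Set (MappingTorus (⇑f))} (hC : IsCompact C) :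
    ∃ n, C ⊆ cyl f (E.L n) := by
  obtain ⟨t, ht⟩ := hC.elim_finite_subcover (fun n => interior (cyl f (E.L n)))
    (fun n => isOpen_interior) (fun q _ => mem_iUnion.mpr (mem_int_cyl E q))
  rcases t.eq_empty_or_nonempty with rfl | htne
  · refine ⟨0, fun x hx => ?_⟩
    simpa using ht hx
  · refine ⟨t.max' htne, ?_⟩
    intro x hx
    obtain ⟨n, hn, hxn⟩ := mem_iUnion₂.mp (ht hx)
    exact cyl_mono f (E.mono (t.le_max' n hn)) (interior_subset hxn)

lemma cyl_mono_nat {m n : ℕ} (h : m ≤ n) : cyl f (E.L m) ⊆ cyl f (E.L n) :=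
  cyl_mono f (E.mono h)

end Cyl
end MTP


section EndsBasic
variable {X : Type*} [TopologicalSpace X]

lemma ends_nonempty (e : SpaceEnds X) (K : {K : Set X // IsCompact K}) : (e.1 K).Nonempty := by
  obtain ⟨x, hx, heq⟩ := e.2.1 K
  exact ⟨x, heq ▸ mem_connectedComponentIn hx⟩

lemma ends_subset_compl (e : SpaceEnds X) (K : {K : Set X // IsCompact K}) :
    e.1 K ⊆ (↑K : Set X)ᶜ := by
  obtain ⟨x, hx, heq⟩ := e.2.1 K
  rw [heq]
  exact connectedComponentIn_subset _ _

lemma ends_preconn (e : SpaceEnds X) (K : {K : Set X // IsCompact K}) :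
    IsPreconnected (e.1 K) := by
  obtain ⟨x, hx, heq⟩ := e.2.1 K
  rw [heq]
  exact isPreconnected_connectedComponentIn

lemma ends_eq_ccIn (e : SpaceEnds X) (K : {K : Set X // IsCompact K}) {y : X}
    (hy : y ∈ e.1 K) : e.1 K = connectedComponentIn (↑K : Set X)ᶜ y := by
  obtain ⟨x, hx, heq⟩ := e.2.1 K
  rw [heq] at hy ⊢
  exact connectedComponentIn_eq hy

lemma ends_noncompact (e : SpaceEnds X) : ¬ IsCompact (univ : Set X) := by
  intro hc
  obtain ⟨x, hx, -⟩ := e.2.1 ⟨univ, hc⟩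
  exact hx (mem_univ x)

lemma ends_nonempty_space (e : SpaceEnds X) : Nonempty X := by
  obtain ⟨x, -, -⟩ := e.2.1 ⟨∅, isCompact_empty⟩
  exact ⟨x⟩

end EndsBasic

namespace MTP
variable {S : Type*} [TopologicalSpace S] [T2Space S] {f : S ≃ₜ S}
variable [LocallyCompactSpace S] [SigmaCompactSpace S]
variable (E : Exh f) (ev : SpaceEnds (MappingTorus (⇑f)))

/-- the compact cylinder as an element of the compacts of the mapping torus -/
noncomputable def De (n : ℕ) : {K : Set (MappingTorus (⇑f)) // IsCompact K} :=
  ⟨cyl f (E.L n), cyl_compact f (E.cpt n)⟩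

/-- the end's component outside the `n`-th cylinder -/
noncomputable def Vv (n : ℕ) : Set (MappingTorus (⇑f)) := ev.1 (De E n)

lemma Vv_mono {m n : ℕ} (h : m ≤ n) : Vv E ev n ⊆ Vv E ev m :=
  ev.2.2 _ _ (cyl_mono_nat E h)

lemma Vv_nonempty (n : ℕ) : (Vv E ev n).Nonempty := ends_nonempty ev (De E n)

lemma Vv_subset (n : ℕ) : Vv E ev n ⊆ (cyl f (E.L n))ᶜ := ends_subset_compl ev (De E n)

lemma Vv_eq_ccIn {n : ℕ} {q : MappingTorus (⇑f)} (hq : q ∈ Vv E ev n) :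
    Vv E ev n = connectedComponentIn (cyl f (E.L n))ᶜ q := ends_eq_ccIn ev (De E n) hq

/-- the trace of the end's components on the zero fiber -/
def Fs (n : ℕ) : Set S := {x | x ∉ E.hl n ∧ mtpi f (x, 0) ∈ Vv E ev n}

lemma Fs_subset (n : ℕ) : Fs E ev n ⊆ (E.hl n)ᶜ := fun x hx => hx.1

lemma Fs_nested {m n : ℕ} (h : m ≤ n) : Fs E ev n ⊆ Fs E ev m := by
  rintro x ⟨hx1, hx2⟩
  exact ⟨fun hc => hx1 (E.hl_mono h hc), Vv_mono E ev h hx2⟩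

lemma Fs_sat {n : ℕ} {x : S} (hx : x ∈ Fs E ev n) :
    connectedComponentIn (E.hl n)ᶜ x ⊆ Fs E ev n := by
  intro z hz
  have hcc := connectedComponentIn_subset (E.hl n)ᶜ x
  have hz1 : z ∉ E.hl n := hcc hz
  have himg : (fun y => mtpi f (y, 0)) '' (connectedComponentIn (E.hl n)ᶜ x) ⊆
      connectedComponentIn (cyl f (E.L n))ᶜ (mtpi f (x, 0)) := by
    apply IsPreconnected.subset_connectedComponentIn
    · exact horiz_preconnected f isPreconnected_connectedComponentIn
    · exact ⟨x, mem_connectedComponentIn hx.1, rfl⟩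
    · apply horiz_subset_compl f
      intro y hy
      have hy' : y ∉ E.hl n := hcc hy
      exact ⟨fun hc => hy' (Or.inl (Or.inl hc)), fun hc => hy' (Or.inl (Or.inr hc))⟩
  have hz2 : mtpi f (z, 0) ∈ Vv E ev n := by
    rw [Vv_eq_ccIn E ev hx.2]
    exact himg ⟨z, hz, rfl⟩
  exact ⟨hz1, hz2⟩

lemma Fs_closure {n : ℕ} : closure (Fs E ev n) ∩ (E.hl n)ᶜ ⊆ Fs E ev n := by
  rintro y ⟨hy1, hy2⟩
  have hcont : Continuous (fun x : S => mtpi f (x, 0)) :=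
    (continuous_mtpi f).comp (continuous_id.prodMk continuous_const)
  have h1 : mtpi f (y, 0) ∈ closure ((fun x : S => mtpi f (x, 0)) '' (Fs E ev n)) := by
    apply image_closure_subset_closure_image hcont
    exact ⟨y, hy1, rfl⟩
  have h2 : ((fun x : S => mtpi f (x, 0)) '' (Fs E ev n)) ⊆ Vv E ev n := by
    rintro q ⟨x, hx, rfl⟩
    exact hx.2
  have h3 : mtpi f (y, 0) ∈ closure (Vv E ev n) := closure_mono h2 h1
  have h4 : mtpi f (y, 0) ∈ (cyl f (E.L n))ᶜ :=
    lev0_avoid f (fun hc => hy2 (Or.inl (Or.inl hc))) (fun hc => hy2 (Or.inl (Or.inr hc)))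
  obtain ⟨q0, hq0⟩ := Vv_nonempty E ev n
  have h5 : mtpi f (y, 0) ∈ Vv E ev n := by
    rw [Vv_eq_ccIn E ev hq0] at h3 ⊢
    exact ccIn_closure_subset ⟨h3, h4⟩
  exact ⟨hy2, h5⟩

lemma Fs_unbounded (n : ℕ) (j : ℕ) : ∃ x ∈ Fs E ev n, x ∉ E.L j := by
  set j' := max (n + 1) j with hj'
  obtain ⟨q, hq⟩ := Vv_nonempty E ev j'
  obtain ⟨⟨y, s⟩, rfl⟩ := surjective_mtpi f q
  have hyL : y ∉ E.L j' := by
    intro hc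
    exact (Vv_subset E ev j' hq) ((mem_cyl_iff f).mpr (Or.inl hc))
  have hyhl : y ∉ E.hl n := by
    intro hc
    exact hyL (E.mono (le_max_left _ _) (E.hl_subset_L n hc))
  have hseg : seg f y ⊆ (cyl f (E.L n))ᶜ := seg_subset_compl f hyhl
  have hmem : mtpi f (y, s) ∈ Vv E ev n :=
    Vv_mono E ev ((Nat.le_succ n).trans (le_max_left (n+1) j)) hq
  have hseg2 : seg f y ⊆ connectedComponentIn (cyl f (E.L n))ᶜ (mtpi f (y, s)) :=
    (seg_preconnected f y).subset_connectedComponentIn ⟨s, mem_univ _, rfl⟩ hseg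
  have h0 : mtpi f (y, 0) ∈ Vv E ev n := by
    rw [Vv_eq_ccIn E ev hmem]
    exact hseg2 (mem_seg_zero f y)
  exact ⟨y, ⟨hyhl, h0⟩, fun hc => hyL (E.mono (le_max_right _ _) hc)⟩

end MTP

namespace MTP
variable {S : Type*} [TopologicalSpace S] [T2Space S] {f : S ≃ₜ S}
variable [LocallyCompactSpace S] [SigmaCompactSpace S] [ConnectedSpace S]

/-- The main limit lemma: a "saturated" unbounded set at level `n+1` contains a point
whose component at level `n` is unbounded. -/
lemma ML (E : Exh f) (hnc : ¬ IsCompact (univ : Set S)) (n : ℕ) {Z : Set S}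
    (hZK : Z ⊆ (E.hl (n+1))ᶜ)
    (hZcl : closure Z ∩ (E.hl (n+1))ᶜ ⊆ Z)
    (hZsat : ∀ x ∈ Z, connectedComponentIn (E.hl (n+1))ᶜ x ⊆ Z)
    (hZub : ∀ j, ∃ x ∈ Z, x ∉ E.L j) :
    ∃ x ∈ Z, ∀ j, ¬ connectedComponentIn (E.hl n)ᶜ x ⊆ E.L j := by
  classical
  choose xs hxsZ hxsL using hZub
  by_cases hdone : ∃ m, ∀ j, ¬ connectedComponentIn (E.hl (n+1))ᶜ (xs m) ⊆ E.L j
  · obtain ⟨m, hm⟩ := hdone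
    refine ⟨xs m, hxsZ m, fun j hsub => hm j ?_⟩
    refine subset_trans ?_ hsub
    exact connectedComponentIn_mono _ (compl_subset_compl.mpr (E.hl_mono (Nat.le_succ n)))
  · push_neg at hdone
    set T' : ℕ → Set S := fun m => connectedComponentIn (E.hl (n+1))ᶜ (xs m) with hT'
    have hT'Z : ∀ m, T' m ⊆ Z := fun m => hZsat _ (hxsZ m)
    have hxmem : ∀ m, xs m ∈ T' m := fun m => mem_connectedComponentIn (hZK (hxsZ m))
    have hT'compl : ∀ m, T' m ⊆ (E.hl (n+1))ᶜ := fun m => connectedComponentIn_subset _ _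
    set Xc : ℕ → Set S := fun m => closure (T' m) with hXc
    have hXcpt : ∀ m, IsCompact (Xc m) := by
      intro m
      obtain ⟨j, hj⟩ := hdone m
      exact (E.cpt j).of_isClosed_subset isClosed_closure
        (closure_minimal hj (E.cpt j).isClosed)
    have hXpc : ∀ m, IsPreconnected (Xc m) :=
      fun m => isPreconnected_connectedComponentIn.closure
    have hXsub : ∀ m, Xc m ⊆ (interior (E.hl (n+1)))ᶜ := by
      intro m
      calc Xc m ⊆ closure ((E.hl (n+1))ᶜ) := closure_mono (hT'compl m)
      _ = (interior (E.hl (n+1)))ᶜ := closure_compl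
    have hXZ : ∀ m, Xc m ⊆ closure Z := fun m => closure_mono (hT'Z m)
    -- anchors
    have hanchor : ∀ m, (closure (T' m) ∩ E.hl (n+1)).Nonempty := by
      intro m
      obtain ⟨j, hj⟩ := hdone m
      exact attach hnc (E.hl_cpt (n+1)) (hZK (hxsZ m)) (E.cpt j) hj
    set a : ℕ → S := fun m => (hanchor m).choose with ha
    have haX : ∀ m, a m ∈ Xc m := fun m => (hanchor m).choose_spec.1
    have hahl : ∀ m, a m ∈ E.hl (n+1) := fun m => (hanchor m).choose_spec.2
    set 𝒰 : Ultrafilter ℕ := Ultrafilter.of atTop with h𝒰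
    have hUof : ∀ i : ℕ, {m | i ≤ m} ∈ 𝒰 := fun i => Ultrafilter.of_le atTop (mem_atTop i)
    have hhlL : ∀ k : ℕ, E.hl (n+1) ⊆ E.L (n+2+k) := by
      intro k
      refine subset_trans (E.hl_subset_L (n+1)) (E.mono ?_)
      omega
    set N : ℕ → ℕ → Set S := fun k m => connectedComponentIn (Xc m ∩ E.L (n+2+k)) (a m)
      with hN
    have haN : ∀ k m, a m ∈ Xc m ∩ E.L (n+2+k) := fun k m => ⟨haX m, hhlL k (hahl m)⟩
    have hNpc : ∀ k m, IsPreconnected (N k m) := fun k m => isPreconnected_connectedComponentIn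
    have hNL : ∀ k m, N k m ⊆ E.L (n+2+k) :=
      fun k m => (connectedComponentIn_subset _ _).trans inter_subset_right
    have hNX : ∀ k m, N k m ⊆ Xc m :=
      fun k m => (connectedComponentIn_subset _ _).trans inter_subset_left
    set R : ℕ → Set S := fun k => ULS 𝒰 (N k) with hR
    -- the common cluster anchor
    obtain ⟨astar, hastar1, hastar2⟩ : ∃ y ∈ E.hl (n+1), ClusterPt y (Filter.map a ↑𝒰) := by
      apply (E.hl_cpt (n+1)).exists_clusterPt
      rw [Filter.le_principal_iff, Filter.mem_map]
      exact Filter.univ_mem' (fun m => hahl m)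
    have hastarR : ∀ k, astar ∈ R k := by
      intro k
      exact mem_ULS_of_cluster hastar2 (Filter.univ_mem' (fun m => mem_connectedComponentIn (haN k m)))
    have hRpc : ∀ k, IsPreconnected (R k) := by
      intro k
      exact ULS_preconnected 𝒰 (E.cpt (n+2+k)) (hNL k) (hNpc k)
    -- located
    have hRcl : ∀ k, R k ⊆ closure (⋃ m, T' m) := by
      intro k
      refine (ULS_subset 𝒰 (N k)).trans ?_
      have h1 : (⋃ m, N k m) ⊆ closure (⋃ m, T' m) := by
        refine iUnion_subset fun m => (hNX k m).trans ?_
        exact closure_mono (subset_iUnion T' m)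
      calc closure (⋃ m, N k m) ⊆ closure (closure (⋃ m, T' m)) := closure_mono h1
      _ = closure (⋃ m, T' m) := closure_closure
    have hRZ : ∀ k, R k ⊆ closure Z := by
      intro k
      refine (hRcl k).trans ?_
      refine closure_minimal ?_ isClosed_closure
      exact iUnion_subset fun m => (hT'Z m).trans subset_closure
    have hRcompl : ∀ k, R k ⊆ (interior (E.hl (n+1)))ᶜ := by
      intro k
      refine (hRcl k).trans ?_
      have : (⋃ m, T' m) ⊆ (interior (E.hl (n+1)))ᶜ := by
        refine iUnion_subset fun m => (subset_closure.trans (hXsub m))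
      exact closure_minimal this (isOpen_interior.isClosed_compl)
    -- shell points
    have hshell : ∀ k, ∃ p, p ∈ R k ∧ p ∈ E.L (n+2+k) \ interior (E.L (n+2+k)) := by
      intro k
      set i := n + 2 + k with hi
      have hbump : ∀ m, i ≤ m →
          ((connectedComponentIn (Xc m ∩ E.L i) (a m)) ∩ closure (Xc m \ E.L i)).Nonempty := by
        intro m hm
        apply bump (hXcpt m) (hXpc m) (E.cpt i).isClosed (haX m) (hhlL k (hahl m))
        exact ⟨xs m, subset_closure (hxmem m), fun hc => hxsL m (E.mono hm hc)⟩
      set dflt : S := (E.shell_ne hnc i).choose with hdflt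
      have hdflt_mem := (E.shell_ne hnc i).choose_spec
      set p : ℕ → S := fun m => if h : i ≤ m then (hbump m h).choose else dflt with hp
      have hp1 : ∀ m, p m ∈ E.L i \ interior (E.L i) := by
        intro m
        by_cases h : i ≤ m
        · have hmem := (hbump m h).choose_spec
          have : p m = (hbump m h).choose := by simp only [hp]; rw [dif_pos h]
          rw [this]
          constructor
          · exact ((connectedComponentIn_subset _ _).trans inter_subset_right) hmem.1
          · intro hc
            have h2 : (hbump m h).choose ∈ closure ((E.L i)ᶜ) :=
              closure_mono (fun y hy => hy.2) hmem.2
            rw [closure_compl] at h2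
            exact h2 hc
        · have : p m = dflt := by simp only [hp]; rw [dif_neg h]
          rw [this]; exact hdflt_mem
      have hp2 : {m | p m ∈ N k m} ∈ 𝒰 := by
        filter_upwards [hUof i] with m hm
        have : p m = (hbump m hm).choose := by simp only [hp]; rw [dif_pos hm]
        rw [this]
        exact (hbump m hm).choose_spec.1
      have hpS : {m | p m ∈ E.L i \ interior (E.L i)} ∈ 𝒰 := Filter.univ_mem' hp1
      obtain ⟨x, hx1, hx2⟩ := exists_cluster_ULS 𝒰
        ((E.cpt i).inter_right isOpen_interior.isClosed_compl) p hpS hp2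
      exact ⟨x, hx2, hx1⟩
    -- shell points are in Z
    have hshellZ : ∀ k, ∀ p, p ∈ R k → p ∈ E.L (n+2+k) \ interior (E.L (n+2+k)) → p ∈ Z := by
      intro k p hpR hpshell
      apply hZcl
      refine ⟨hRZ k hpR, ?_⟩
      intro hc
      have : p ∈ interior (E.L (n+2+k)) := by
        have h1 : E.hl (n+1) ⊆ interior (E.L (n+2+k)) := by
          refine (E.hl_subset_int_L (n+1)).trans (interior_mono (E.mono ?_))
          omega
        exact h1 hc
      exact hpshell.2 this
    -- the connected unbounded set
    set Rbig : Set S := ⋃ k, R k with hRbig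
    have hRbigpc : IsPreconnected Rbig := by
      rw [hRbig, ← sUnion_range]
      apply isPreconnected_sUnion astar
      · rintro s ⟨k, rfl⟩; exact hastarR k
      · rintro s ⟨k, rfl⟩; exact hRpc k
    have hRbigcompl : Rbig ⊆ (E.hl n)ᶜ := by
      refine iUnion_subset fun k => (hRcompl k).trans ?_
      exact compl_subset_compl.mpr (E.hl_subset_int_hl n)
    obtain ⟨p0, hp0R, hp0sh⟩ := hshell 0
    have hp0Z : p0 ∈ Z := hshellZ 0 p0 hp0R hp0sh
    refine ⟨p0, hp0Z, ?_⟩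
    intro j hsub
    obtain ⟨pj, hpjR, hpjsh⟩ := hshell j
    have hpj_in : pj ∈ connectedComponentIn (E.hl n)ᶜ p0 := by
      have : Rbig ⊆ connectedComponentIn (E.hl n)ᶜ p0 := by
        apply hRbigpc.subset_connectedComponentIn
        · exact mem_iUnion.mpr ⟨0, hp0R⟩
        · exact hRbigcompl
      exact this (mem_iUnion.mpr ⟨j, hpjR⟩)
    have hpjL : pj ∈ E.L j := hsub hpj_in
    have : pj ∈ interior (E.L (n+2+j)) := by
      have h1 : E.L j ⊆ interior (E.L (n+2+j)) := by
        refine (E.subset_int_succ j).trans (interior_mono (E.mono ?_))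
        omega
      exact h1 hpjL
    exact hpjsh.2 this

end MTP

namespace MTP
variable {S : Type*} [TopologicalSpace S] [T2Space S] {f : S ≃ₜ S}
variable [LocallyCompactSpace S] [SigmaCompactSpace S] [ConnectedSpace S]

lemma chain_step (E : Exh f) (hnc : ¬ IsCompact (univ : Set S)) (v : ℕ) (x : S)
    (hx : x ∈ (E.hl v)ᶜ) (hub : ∀ j, ¬ connectedComponentIn (E.hl v)ᶜ x ⊆ E.L j) :
    ∃ y, y ∈ connectedComponentIn (E.hl v)ᶜ x ∧ y ∈ (E.hl (v+1))ᶜ ∧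
      ∀ j, ¬ connectedComponentIn (E.hl (v+1))ᶜ y ⊆ E.L j := by
  set Z : Set S := {z | z ∈ connectedComponentIn (E.hl v)ᶜ x ∧ z ∉ E.hl (v+2)} with hZ
  have hml := ML E hnc (v+1) (Z := Z) ?_ ?_ ?_ ?_
  · obtain ⟨y, hyZ, hy⟩ := hml
    exact ⟨y, hyZ.1, fun hc => hyZ.2 (E.hl_mono (by omega) hc), hy⟩
  · exact fun z hz => hz.2
  · rintro y ⟨hy1, hy2⟩
    have hcl : y ∈ closure (connectedComponentIn (E.hl v)ᶜ x) := by
      refine closure_mono ?_ hy1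
      exact fun z hz => hz.1
    have hyv : y ∈ (E.hl v)ᶜ := fun hc => hy2 (E.hl_mono (by omega) hc)
    exact ⟨ccIn_closure_subset ⟨hcl, hyv⟩, hy2⟩
  · rintro z ⟨hz1, hz2⟩ w hw
    have hw1 : w ∈ connectedComponentIn (E.hl v)ᶜ z :=
      connectedComponentIn_mono _ (compl_subset_compl.mpr (E.hl_mono (by omega))) hw
    have heq : connectedComponentIn (E.hl v)ᶜ x = connectedComponentIn (E.hl v)ᶜ z :=
      connectedComponentIn_eq hz1
    exact ⟨heq ▸ hw1, (connectedComponentIn_subset _ _ hw : w ∈ (E.hl (v+2))ᶜ)⟩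
  · intro j
    obtain ⟨z, hz1, hz2⟩ := not_subset.mp (hub (max j (v+3)))
    refine ⟨z, ⟨hz1, fun hc => hz2 (E.mono (le_max_right j (v+3)) (by
      have : E.hl (v+2) ⊆ E.L (v+3) := E.hl_subset_L (v+2)
      exact this hc))⟩, fun hc => hz2 (E.mono (le_max_left j (v+3)) hc)⟩

/-- The chain of nested unbounded components. -/
noncomputable def chainG (E : Exh f) (hnc : ¬ IsCompact (univ : Set S)) (v0 : ℕ) (x0 : S)
    (hx0 : x0 ∈ (E.hl v0)ᶜ) (hub0 : ∀ j, ¬ connectedComponentIn (E.hl v0)ᶜ x0 ⊆ E.L j) :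
    (k : ℕ) → {y : S // y ∈ (E.hl (v0 + k))ᶜ ∧
      ∀ j, ¬ connectedComponentIn (E.hl (v0 + k))ᶜ y ⊆ E.L j}
  | 0 => ⟨x0, hx0, hub0⟩
  | (k+1) =>
    let p := chainG E hnc v0 x0 hx0 hub0 k
    let h := chain_step E hnc (v0 + k) p.1 p.2.1 p.2.2
    ⟨h.choose, h.choose_spec.2.1, h.choose_spec.2.2⟩

lemma chainG_link (E : Exh f) (hnc : ¬ IsCompact (univ : Set S)) (v0 : ℕ) (x0 : S)
    (hx0 : x0 ∈ (E.hl v0)ᶜ) (hub0 : ∀ j, ¬ connectedComponentIn (E.hl v0)ᶜ x0 ⊆ E.L j)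
    (k : ℕ) :
    (chainG E hnc v0 x0 hx0 hub0 (k+1)).1 ∈
      connectedComponentIn (E.hl (v0 + k))ᶜ (chainG E hnc v0 x0 hx0 hub0 k).1 := by
  have h := (chain_step E hnc (v0 + k) (chainG E hnc v0 x0 hx0 hub0 k).1
      (chainG E hnc v0 x0 hx0 hub0 k).2.1 (chainG E hnc v0 x0 hx0 hub0 k).2.2).choose_spec
  exact h.1

lemma chainG_memW (E : Exh f) (hnc : ¬ IsCompact (univ : Set S)) (v0 : ℕ) (x0 : S)
    (hx0 : x0 ∈ (E.hl v0)ᶜ) (hub0 : ∀ j, ¬ connectedComponentIn (E.hl v0)ᶜ x0 ⊆ E.L j)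
    {k m : ℕ} (h : k ≤ m) :
    (chainG E hnc v0 x0 hx0 hub0 m).1 ∈
      connectedComponentIn (E.hl (v0 + k))ᶜ (chainG E hnc v0 x0 hx0 hub0 k).1 := by
  induction m with
  | zero =>
    have : k = 0 := Nat.le_zero.mp h
    subst this
    exact mem_connectedComponentIn (chainG E hnc v0 x0 hx0 hub0 0).2.1
  | succ m ih =>
    rcases Nat.lt_or_ge k (m+1) with hk | hk
    · have hk' : k ≤ m := by omega
      have h1 := chainG_link E hnc v0 x0 hx0 hub0 m
      have h2 := ih hk'
      -- (chainG (m+1)) ∈ ccIn (hl (v0+m))ᶜ (chainG m) ⊆ ccIn (hl(v0+k))ᶜ (chainG m)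
      have h3 : (chainG E hnc v0 x0 hx0 hub0 (m+1)).1 ∈
          connectedComponentIn (E.hl (v0 + k))ᶜ (chainG E hnc v0 x0 hx0 hub0 m).1 :=
        connectedComponentIn_mono _ (compl_subset_compl.mpr (E.hl_mono (by omega))) h1
      have heq := connectedComponentIn_eq h2
      rw [heq]
      exact h3
    · have : k = m + 1 := by omega
      subst this
      exact mem_connectedComponentIn (chainG E hnc v0 x0 hx0 hub0 (m+1)).2.1

/-- There is an end of `S` through any unbounded component of the complement of a hull. -/
lemma exists_end_through (E : Exh f) (hnc : ¬ IsCompact (univ : Set S)) (v0 : ℕ) (x0 : S)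
    (hx0 : x0 ∈ (E.hl v0)ᶜ) (hub0 : ∀ j, ¬ connectedComponentIn (E.hl v0)ᶜ x0 ⊆ E.L j) :
    ∃ η : SpaceEnds S, η.1 ⟨E.hl v0, E.hl_cpt v0⟩ = connectedComponentIn (E.hl v0)ᶜ x0 := by
  classical
  set g := chainG E hnc v0 x0 hx0 hub0 with hg
  set ν : {K : Set S // IsCompact K} → ℕ := fun K => (E.absorb K.2).choose with hν
  have hKsub : ∀ K : {K : Set S // IsCompact K}, (↑K : Set S) ⊆ E.hl (v0 + ν K) := by
    intro K
    have h1 : (↑K : Set S) ⊆ interior (E.L (ν K)) := (E.absorb K.2).choose_spec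
    refine h1.trans (interior_subset.trans ((E.mono (by omega)).trans (E.L_subset_hl _)))
  set ηf : {K : Set S // IsCompact K} → Set S :=
    fun K => connectedComponentIn (↑K : Set S)ᶜ (g (ν K)).1 with hηf
  have hmemKc : ∀ (K : {K : Set S // IsCompact K}) (m : ℕ), ν K ≤ m → (g m).1 ∈ (↑K : Set S)ᶜ := by
    intro K m hm
    intro hc
    have h1 : (g m).1 ∈ (E.hl (v0 + m))ᶜ := (g m).2.1
    exact h1 (E.hl_mono (by omega) (hKsub K hc))
  -- the common-basepoint argument
  have hkey : ∀ (K : {K : Set S // IsCompact K}) (m : ℕ), ν K ≤ m →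
      ηf K = connectedComponentIn (↑K : Set S)ᶜ (g m).1 := by
    intro K m hm
    apply connectedComponentIn_eq
    have h1 : (g m).1 ∈ connectedComponentIn (E.hl (v0 + ν K))ᶜ (g (ν K)).1 :=
      chainG_memW E hnc v0 x0 hx0 hub0 hm
    exact connectedComponentIn_mono _ (compl_subset_compl.mpr (hKsub K)) h1
  refine ⟨⟨ηf, ⟨?_, ?_⟩⟩, ?_⟩
  · intro K
    exact ⟨(g (ν K)).1, hmemKc K (ν K) le_rfl, rfl⟩
  · intro K K' hKK'
    set m := max (ν K) (ν K') with hm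
    have e1 : ηf K = connectedComponentIn (↑K : Set S)ᶜ (g m).1 := hkey K m (le_max_left _ _)
    have e2 : ηf K' = connectedComponentIn (↑K' : Set S)ᶜ (g m).1 := hkey K' m (le_max_right _ _)
    rw [e1, e2]
    exact connectedComponentIn_mono _ (compl_subset_compl.mpr hKK')
  · show ηf ⟨E.hl v0, E.hl_cpt v0⟩ = connectedComponentIn (E.hl v0)ᶜ x0
    set K0 : {K : Set S // IsCompact K} := ⟨E.hl v0, E.hl_cpt v0⟩ with hK0
    have h1 : (g (ν K0)).1 ∈ connectedComponentIn (E.hl v0)ᶜ x0 := by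
      have h2 : (g (ν K0)).1 ∈ connectedComponentIn (E.hl (v0 + 0))ᶜ (g 0).1 :=
        chainG_memW E hnc v0 x0 hx0 hub0 (Nat.zero_le _)
      exact h2
    exact (connectedComponentIn_eq h1).symm

end MTP

namespace MTP
variable {S : Type*} [TopologicalSpace S] [T2Space S] {f : S ≃ₜ S}
variable [LocallyCompactSpace S] [SigmaCompactSpace S] [ConnectedSpace S]

/-- the level-0 image of an end's component -/
noncomputable def Gset (E : Exh f) (e : SpaceEnds S) (j : ℕ) : Set (MappingTorus (⇑f)) :=
  (fun x => mtpi f (x, 0)) '' (e.1 ⟨E.hl j, E.hl_cpt j⟩)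

lemma Gset_nonempty (E : Exh f) (e : SpaceEnds S) (j : ℕ) : (Gset E e j).Nonempty :=
  (ends_nonempty e _).image _

lemma Gset_preconn (E : Exh f) (e : SpaceEnds S) (j : ℕ) : IsPreconnected (Gset E e j) :=
  horiz_preconnected f (ends_preconn e _)

lemma Gset_avoid (E : Exh f) (e : SpaceEnds S) {n j : ℕ} (hj : n ≤ j) :
    Gset E e j ⊆ (cyl f (E.L n))ᶜ := by
  apply horiz_subset_compl f
  intro x hx
  have hxc : x ∉ E.hl j := ends_subset_compl e _ hx
  constructor
  · exact fun hc => hxc (E.hl_mono hj (Or.inl (Or.inl hc)))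
  · exact fun hc => hxc (E.hl_mono hj (Or.inl (Or.inr hc)))

/-- two points of an end's component at the same level are connected avoiding a cylinder -/
lemma e0_connect (E : Exh f) (e0 : SpaceEnds S) {C : Set (MappingTorus (⇑f))} {n j : ℕ}
    (hCn : C ⊆ cyl f (E.L n)) (hj : n ≤ j) {x z : S}
    (hx : x ∈ e0.1 ⟨E.hl j, E.hl_cpt j⟩) (hz : z ∈ e0.1 ⟨E.hl j, E.hl_cpt j⟩) :
    mtpi f (z, 0) ∈ connectedComponentIn Cᶜ (mtpi f (x, 0)) := by
  have hG : Gset E e0 j ⊆ Cᶜ := (Gset_avoid E e0 hj).trans (compl_subset_compl.mpr hCn)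
  have hsub : Gset E e0 j ⊆ connectedComponentIn Cᶜ (mtpi f (x, 0)) :=
    (Gset_preconn E e0 j).subset_connectedComponentIn ⟨x, hx, rfl⟩ hG
  exact hsub ⟨z, hz, rfl⟩

section Orb
variable (E : Exh f) (orb : ℤ → SpaceEnds S)

/-- consecutive orbit ends are linked outside any cylinder -/
lemma link_pair (hcor : ∀ n : ℤ, EndCorresp (⇑f) (orb n) (orb (n + 1))) (t : ℕ) (n : ℤ) :
    ∃ c : MappingTorus (⇑f), Gset E (orb n) (t+1) ⊆ connectedComponentIn (cyl f (E.L t))ᶜ c ∧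
      Gset E (orb (n+1)) (t+1) ⊆ connectedComponentIn (cyl f (E.L t))ᶜ c := by
  obtain ⟨K', hK', hsub, himg⟩ := hcor n (E.hl (t+1)) (E.hl_cpt (t+1))
  obtain ⟨j, hj⟩ := E.absorb (hK'.union (E.hl_cpt (t+1)))
  set j' := max j (t+2) with hj'
  have hK'sub : K' ⊆ E.hl j' := by
    intro y hy
    have : y ∈ interior (E.L j) := hj (Or.inl hy)
    exact E.L_subset_hl j' (E.mono (le_max_left _ _) (interior_subset this))
  have hHsub : E.hl (t+1) ⊆ E.hl j' := E.hl_mono (by omega)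
  obtain ⟨a, ha⟩ := ends_nonempty (orb n) ⟨E.hl j', E.hl_cpt j'⟩
  have h1 : a ∈ (orb n).1 ⟨K', hK'⟩ := (orb n).2.2 ⟨K', hK'⟩ ⟨E.hl j', E.hl_cpt j'⟩ hK'sub ha
  have h2 : ⇑f a ∈ (orb (n+1)).1 ⟨E.hl (t+1), E.hl_cpt (t+1)⟩ := himg ⟨a, h1, rfl⟩
  have h3 : a ∈ (orb n).1 ⟨E.hl (t+1), E.hl_cpt (t+1)⟩ :=
    (orb n).2.2 ⟨E.hl (t+1), E.hl_cpt (t+1)⟩ ⟨E.hl j', E.hl_cpt j'⟩ hHsub ha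
  have hahl : a ∉ E.hl t := by
    intro hc
    exact (ends_subset_compl (orb n) ⟨E.hl j', E.hl_cpt j'⟩ ha) (E.hl_mono (by omega) hc)
  set c := mtpi f (a, 0) with hc
  have hseg : seg f a ⊆ connectedComponentIn (cyl f (E.L t))ᶜ c :=
    (seg_preconnected f a).subset_connectedComponentIn (mem_seg_zero f a) (seg_subset_compl f hahl)
  refine ⟨c, ?_, ?_⟩
  · exact (Gset_preconn E (orb n) (t+1)).subset_connectedComponentIn ⟨a, h3, rfl⟩
      ((Gset_avoid E (orb n) (by omega)).trans (le_refl _))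
  · have hfa : mtpi f (⇑f a, 0) ∈ connectedComponentIn (cyl f (E.L t))ᶜ c := by
      rw [← mtpi_one_eq f a]
      exact hseg (mem_seg_one f a)
    have heq := connectedComponentIn_eq hfa
    rw [heq]
    exact (Gset_preconn E (orb (n+1)) (t+1)).subset_connectedComponentIn ⟨⇑f a, h2, rfl⟩
      (Gset_avoid E (orb (n+1)) (by omega))

/-- all orbit ends are linked to the orbit end 0 -/
lemma link_all (hcor : ∀ n : ℤ, EndCorresp (⇑f) (orb n) (orb (n + 1))) (t : ℕ) {p : MappingTorus (⇑f)} (hp : p ∈ Gset E (orb 0) (t+1)) (n : ℤ) :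
    Gset E (orb n) (t+1) ⊆ connectedComponentIn (cyl f (E.L t))ᶜ p := by
  have hbase : ∀ m : ℤ, ∀ q ∈ Gset E (orb m) (t+1),
      Gset E (orb m) (t+1) ⊆ connectedComponentIn (cyl f (E.L t))ᶜ q := by
    intro m q hq
    exact (Gset_preconn E (orb m) (t+1)).subset_connectedComponentIn hq
      (Gset_avoid E (orb m) (by omega))
  induction n using Int.induction_on with
  | zero => exact hbase 0 p hp
  | succ i ih =>
    obtain ⟨c, hc1, hc2⟩ := link_pair E orb hcor t i
    obtain ⟨q, hq⟩ := Gset_nonempty E (orb i) (t+1)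
    have e1 : connectedComponentIn (cyl f (E.L t))ᶜ c =
        connectedComponentIn (cyl f (E.L t))ᶜ q := connectedComponentIn_eq (hc1 hq)
    have e2 : connectedComponentIn (cyl f (E.L t))ᶜ p =
        connectedComponentIn (cyl f (E.L t))ᶜ q := connectedComponentIn_eq (ih hq)
    rw [e2, ← e1]
    exact hc2
  | pred i ih =>
    obtain ⟨c, hc1, hc2⟩ := link_pair E orb hcor t (-(i+1) : ℤ)
    obtain ⟨q, hq⟩ := Gset_nonempty E (orb (-(i:ℤ))) (t+1)
    have hcast : (-(i+1) : ℤ) + 1 = -(i : ℤ) := by ring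
    rw [hcast] at hc2
    have e1 : connectedComponentIn (cyl f (E.L t))ᶜ c =
        connectedComponentIn (cyl f (E.L t))ᶜ q := connectedComponentIn_eq (hc2 hq)
    have e2 : connectedComponentIn (cyl f (E.L t))ᶜ p =
        connectedComponentIn (cyl f (E.L t))ᶜ q := connectedComponentIn_eq (ih hq)
    have hcast2 : (-(i:ℤ)) - 1 = -(i+1 : ℤ) := by ring
    rw [hcast2, e2, ← e1]
    exact hc1
end Orb
end MTP

namespace MTP
variable {S : Type*} [TopologicalSpace S] [T2Space S] {f : S ≃ₜ S}
variable [LocallyCompactSpace S] [SigmaCompactSpace S] [ConnectedSpace S]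

variable (E : Exh f)

/-- level of a compact set of the mapping torus -/
noncomputable def epsLev (C : {K : Set (MappingTorus (⇑f)) // IsCompact K}) : ℕ :=
  (absorbM E C.2).choose

lemma epsLev_spec (C : {K : Set (MappingTorus (⇑f)) // IsCompact K}) :
    (↑C : Set (MappingTorus (⇑f))) ⊆ cyl f (E.L (epsLev E C)) :=
  (absorbM E C.2).choose_spec

/-- base point of the pushforward end -/
noncomputable def epsPt (e0 : SpaceEnds S) (C : {K : Set (MappingTorus (⇑f)) // IsCompact K}) : S :=
  (ends_nonempty e0 ⟨E.hl (epsLev E C + 1), E.hl_cpt _⟩).choose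

lemma epsPt_spec (e0 : SpaceEnds S) (C : {K : Set (MappingTorus (⇑f)) // IsCompact K}) :
    epsPt E e0 C ∈ e0.1 ⟨E.hl (epsLev E C + 1), E.hl_cpt _⟩ :=
  (ends_nonempty e0 ⟨E.hl (epsLev E C + 1), E.hl_cpt _⟩).choose_spec

lemma epsPt_avoid (e0 : SpaceEnds S) (C : {K : Set (MappingTorus (⇑f)) // IsCompact K}) :
    mtpi f (epsPt E e0 C, 0) ∈ (↑C : Set (MappingTorus (⇑f)))ᶜ := by
  intro hc
  have h1 : epsPt E e0 C ∉ E.hl (epsLev E C + 1) :=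
    ends_subset_compl e0 _ (epsPt_spec E e0 C)
  have h2 : mtpi f (epsPt E e0 C, 0) ∈ cyl f (E.L (epsLev E C)) := epsLev_spec E C hc
  rcases (mem_cyl_iff f).mp h2 with h | ⟨-, h⟩ | ⟨h0, -⟩
  · exact h1 (E.hl_mono (Nat.le_succ _) (Or.inl (Or.inl h)))
  · exact h1 (E.hl_mono (Nat.le_succ _) (Or.inl (Or.inr ⟨⇑f.symm (epsPt E e0 C), h, by simp⟩)))
  · exact I_zero_ne_one h0

/-- the pushforward of an end of `S` to an end of the mapping torus -/
noncomputable def epsEnd (e0 : SpaceEnds S) : SpaceEnds (MappingTorus (⇑f)) := by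
  refine ⟨fun C => connectedComponentIn (↑C : Set (MappingTorus (⇑f)))ᶜ
    (mtpi f (epsPt E e0 C, 0)), ?_, ?_⟩
  · intro C
    exact ⟨mtpi f (epsPt E e0 C, 0), epsPt_avoid E e0 C, rfl⟩
  · intro C C' hCC'
    set n := epsLev E C with hn
    set n' := epsLev E C' with hn'
    set k := max (n+1) (n'+1) with hk
    obtain ⟨z, hz⟩ := ends_nonempty e0 ⟨E.hl k, E.hl_cpt k⟩
    have hz1 : z ∈ e0.1 ⟨E.hl (n+1), E.hl_cpt _⟩ :=
      e0.2.2 _ ⟨E.hl k, E.hl_cpt k⟩ (E.hl_mono (le_max_left _ _)) hz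
    have hz2 : z ∈ e0.1 ⟨E.hl (n'+1), E.hl_cpt _⟩ :=
      e0.2.2 _ ⟨E.hl k, E.hl_cpt k⟩ (E.hl_mono (le_max_right _ _)) hz
    have step1 : mtpi f (z, 0) ∈ connectedComponentIn (↑C : Set (MappingTorus (⇑f)))ᶜ
        (mtpi f (epsPt E e0 C, 0)) :=
      e0_connect E e0 (epsLev_spec E C) (Nat.le_succ n) (epsPt_spec E e0 C) hz1
    have step2 : mtpi f (epsPt E e0 C', 0) ∈
        connectedComponentIn (↑C : Set (MappingTorus (⇑f)))ᶜ (mtpi f (z, 0)) :=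
      e0_connect E e0 (hCC'.trans (epsLev_spec E C')) (Nat.le_succ n') hz2 (epsPt_spec E e0 C')
    have hmem : mtpi f (epsPt E e0 C', 0) ∈ connectedComponentIn
        (↑C : Set (MappingTorus (⇑f)))ᶜ (mtpi f (epsPt E e0 C, 0)) := by
      rw [connectedComponentIn_eq step1]
      exact step2
    calc connectedComponentIn (↑C' : Set (MappingTorus (⇑f)))ᶜ (mtpi f (epsPt E e0 C', 0))
        ⊆ connectedComponentIn (↑C : Set (MappingTorus (⇑f)))ᶜ (mtpi f (epsPt E e0 C', 0)) :=
          connectedComponentIn_mono _ (compl_subset_compl.mpr hCC')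
      _ = connectedComponentIn (↑C : Set (MappingTorus (⇑f)))ᶜ (mtpi f (epsPt E e0 C, 0)) :=
          (connectedComponentIn_eq hmem).symm

end MTP

open MTP in
/-- If a homeomorphism `f` of a connected, locally compact, σ-compact Hausdorff space `S`
has an end whose `f_*`-orbit is dense in `Ends S` (expressed via an orbit sequence for the
induced map on ends), then the mapping torus `M_f` has exactly one end. -/
theorem mappingTorus_one_end_of_dense_end_orbit {S : Type*} [TopologicalSpace S]
    [ConnectedSpace S] [T2Space S] [LocallyCompactSpace S] [SigmaCompactSpace S]
    (f : S ≃ₜ S)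
    (h : ∃ orb : ℤ → SpaceEnds S,
      (∀ n : ℤ, EndCorresp (⇑f) (orb n) (orb (n + 1))) ∧ Dense (Set.range orb)) :
    ∃ ε : SpaceEnds (MappingTorus (⇑f)), ∀ ε' : SpaceEnds (MappingTorus (⇑f)), ε' = ε := by
  classical
  obtain ⟨orb, hcor, hdense⟩ := h
  haveI : Nonempty S := ends_nonempty_space (orb 0)
  have hnc : ¬ IsCompact (univ : Set S) := ends_noncompact (orb 0)
  set E : Exh f := mkExh f with hE
  set e0 : SpaceEnds S := orb 0 with he0
  refine ⟨epsEnd E e0, ?_⟩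
  intro ε'
  apply Subtype.ext
  funext C
  set t := epsLev E C with ht
  -- Step (a): apply the main limit lemma to the fiber trace of ε'
  have hml := ML E hnc (t+1) (Z := Fs E ε' (t+2)) (Fs_subset E ε' (t+2)) (Fs_closure E ε')
    (fun x hx => Fs_sat E ε' hx) (fun j => Fs_unbounded E ε' (t+2) j)
  obtain ⟨xst, hxstF, hub⟩ := hml
  have hxstmem : xst ∈ (E.hl (t+1))ᶜ := by
    intro hc
    exact (Fs_subset E ε' (t+2) hxstF) (E.hl_mono (Nat.le_succ _) hc)
  -- Step (b): W, the unbounded component, lies in the fiber trace at level t+1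
  set W : Set S := connectedComponentIn (E.hl (t+1))ᶜ xst with hW
  have hWF : W ⊆ Fs E ε' (t+1) :=
    Fs_sat E ε' (Fs_nested E ε' (Nat.le_succ (t+1)) hxstF)
  -- Step (c): an end of S through W
  obtain ⟨η, hη⟩ := exists_end_through E hnc (t+1) xst hxstmem hub
  -- Step (d): density gives an orbit end with the same component
  have hk : ∃ k : ℤ, (orb k).1 ⟨E.hl (t+1), E.hl_cpt (t+1)⟩ = W := by
    letI : TopologicalSpace (Set S) := ⊥
    haveI : DiscreteTopology (Set S) := ⟨rfl⟩
    have heval : Continuous (fun g : {K : Set S // IsCompact K} → Set S =>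
        g ⟨E.hl (t+1), E.hl_cpt (t+1)⟩) := continuous_apply _
    have hval : Continuous (Subtype.val : SpaceEnds S → ({K : Set S // IsCompact K} → Set S)) :=
      continuous_induced_dom
    have hOopen : IsOpen {e : SpaceEnds S | e.1 ⟨E.hl (t+1), E.hl_cpt (t+1)⟩ = W} := by
      have := (heval.comp hval).isOpen_preimage {W} (isOpen_discrete _)
      exact this
    have hOne : {e : SpaceEnds S | e.1 ⟨E.hl (t+1), E.hl_cpt (t+1)⟩ = W}.Nonempty := ⟨η, hη⟩
    obtain ⟨e', ⟨k, rfl⟩, hk⟩ := hdense.exists_mem_open hOopen hOne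
    exact ⟨k, hk⟩
  obtain ⟨k, hkW⟩ := hk
  -- Step (e): a point of W in the orbit end
  obtain ⟨w, hw⟩ := ends_nonempty (orb k) ⟨E.hl (t+1), E.hl_cpt (t+1)⟩
  have hwW : w ∈ W := hkW ▸ hw
  have hwF : w ∈ Fs E ε' (t+1) := hWF hwW
  -- Step (f): link to the base point of the pushforward end
  set p0 := mtpi f (epsPt E e0 C, 0) with hp0
  have hp0G : p0 ∈ Gset E (orb 0) (t+1) := ⟨epsPt E e0 C, epsPt_spec E e0 C, rfl⟩
  have hlink := link_all E orb hcor t hp0G k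
  have hq : mtpi f (w, 0) ∈ connectedComponentIn (cyl f (E.L t))ᶜ p0 :=
    hlink ⟨w, hw, rfl⟩
  -- Step (g): conclude
  set q := mtpi f (w, 0) with hqdef
  have hqC : q ∈ ε'.1 C := by
    have h1 : q ∈ Vv E ε' (t+1) := hwF.2
    have h2 : Vv E ε' (t+1) ⊆ Vv E ε' t := Vv_mono E ε' (Nat.le_succ t)
    have h3 : Vv E ε' t ⊆ ε'.1 C := ε'.2.2 C (De E t) (epsLev_spec E C)
    exact h3 (h2 h1)
  have hqcc : q ∈ connectedComponentIn (↑C : Set (MappingTorus (⇑f)))ᶜ p0 :=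
    connectedComponentIn_mono _ (compl_subset_compl.mpr (epsLev_spec E C)) hq
  calc ε'.1 C = connectedComponentIn (↑C : Set (MappingTorus (⇑f)))ᶜ q := ends_eq_ccIn ε' C hqC
    _ = connectedComponentIn (↑C : Set (MappingTorus (⇑f)))ᶜ p0 := (connectedComponentIn_eq hqcc).symm
    _ = (epsEnd E e0).1 C := rfl
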